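/- arXiv:1612.01425 — 2 statements merged into one kernel-verified Lean document; each statement's English description precedes it below -/
import Mathlib

section
/- Let f : ℝ^N → ℝ be continuous, let μ ∈ ℝ^N have μ_j > 0 for every j, and for each j define the coordinate-smoothed function f^j(x) = (1/(2μ_j)) ∫_{−μ_j}^{μ_j} f(x + v e_j) dv. Assume the mixtured gradient map x ↦ ∑_{j=1}^N ∂_j f^j(x) e_j is Lipschitz with constant L̃, i.e. ‖∑_{j=1}^N ∂_j f^j(x) e_j − ∑_{j=1}^N ∂_j f^j(y) e_j‖ ≤ L̃ ‖x − y‖ for all x, y. Then the central-difference gradient estimator g_f satisfies ‖g_f(x) − g_f(y)‖² ≤ L̃² ‖x − y‖² for all x, y ∈ ℝ^N. -/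
open MeasureTheory

/-- The coordinate-smoothed function `f^j(x) = (1/(2 μ j)) ∫_{-μ j}^{μ j} f(x + v e_j) dv`. -/
noncomputable def smoothedCoord (N : ℕ) (f : EuclideanSpace ℝ (Fin N) → ℝ) (μ : Fin N → ℝ)
    (j : Fin N) (x : EuclideanSpace ℝ (Fin N)) : ℝ :=
  (1 / (2 * μ j)) * ∫ v in (-(μ j))..(μ j), f (x + v • EuclideanSpace.single j (1 : ℝ))

/-- The mixtured gradient `∑_j ∂_j f^j(x) e_j`, where `∂_j f^j(x)` is the derivative of
`s ↦ f^j(x + s e_j)` at `0`. -/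
noncomputable def mixGrad (N : ℕ) (f : EuclideanSpace ℝ (Fin N) → ℝ) (μ : Fin N → ℝ)
    (x : EuclideanSpace ℝ (Fin N)) : EuclideanSpace ℝ (Fin N) :=
  ∑ j : Fin N,
    (deriv (fun s : ℝ => smoothedCoord N f μ j (x + s • EuclideanSpace.single j (1 : ℝ))) 0) •
      EuclideanSpace.single j (1 : ℝ)

/-- The central-difference gradient estimator
`g_f(x) = ∑_j ((f(x + μ_j e_j) - f(x - μ_j e_j))/(2 μ_j)) e_j`. -/
noncomputable def cdGrad (N : ℕ) (f : EuclideanSpace ℝ (Fin N) → ℝ) (μ : Fin N → ℝ)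
    (x : EuclideanSpace ℝ (Fin N)) : EuclideanSpace ℝ (Fin N) :=
  ∑ j : Fin N,
    ((f (x + μ j • EuclideanSpace.single j (1 : ℝ)) -
        f (x - μ j • EuclideanSpace.single j (1 : ℝ))) / (2 * μ j)) •
      EuclideanSpace.single j (1 : ℝ)

lemma mixGrad_eq_cdGrad (N : ℕ) (f : EuclideanSpace ℝ (Fin N) → ℝ) (hf : Continuous f)
    (μ : Fin N → ℝ) (hμ : ∀ j, 0 < μ j) (x : EuclideanSpace ℝ (Fin N)) :
    mixGrad N f μ x = cdGrad N f μ x := by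
  unfold mixGrad cdGrad
  refine Finset.sum_congr rfl fun j _ => ?_
  congr 1
  set e : EuclideanSpace ℝ (Fin N) := EuclideanSpace.single j (1 : ℝ)
  set φ : ℝ → ℝ := fun u => f (x + u • e) with hφ
  have hφc : Continuous φ := by
    apply hf.comp
    exact continuous_const.add (continuous_id.smul continuous_const)
  -- rewrite the function whose derivative we take
  have key : (fun s : ℝ => smoothedCoord N f μ j (x + s • e)) =
      fun s : ℝ => (1 / (2 * μ j)) * ((∫ t in (0:ℝ)..(s + μ j), φ t) -
        ∫ t in (0:ℝ)..(s - μ j), φ t) := by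
    funext s
    unfold smoothedCoord
    congr 1
    have h1 : ∀ v : ℝ, f (x + s • e + v • e) = φ (s + v) := by
      intro v
      simp only [hφ, add_smul, add_assoc]
    rw [show (∫ v in (-(μ j))..(μ j), f (x + s • e + v • EuclideanSpace.single j (1:ℝ)))
        = ∫ v in (-(μ j))..(μ j), φ (s + v) from by
      refine intervalIntegral.integral_congr fun v _ => h1 v]
    rw [intervalIntegral.integral_comp_add_left φ s]
    rw [intervalIntegral.integral_interval_sub_left (hφc.intervalIntegrable _ _)
      (hφc.intervalIntegrable _ _)]
    ring_nf
  rw [key]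
  have hd1 : HasDerivAt (fun s : ℝ => ∫ t in (0:ℝ)..(s + μ j), φ t) (φ (μ j)) 0 := by
    have h0 : HasDerivAt (fun u => ∫ t in (0:ℝ)..u, φ t) (φ (μ j)) (id (0:ℝ) + μ j) := by
      simpa using intervalIntegral.integral_hasDerivAt_right (hφc.intervalIntegrable 0 (μ j))
        (hφc.stronglyMeasurableAtFilter _ _) (hφc.continuousAt)
    have := h0.comp 0 ((hasDerivAt_id (0:ℝ)).add_const (μ j))
    simpa [Function.comp_def] using this
  have hd2 : HasDerivAt (fun s : ℝ => ∫ t in (0:ℝ)..(s - μ j), φ t) (φ (-μ j)) 0 := by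
    have h0 : HasDerivAt (fun u => ∫ t in (0:ℝ)..u, φ t) (φ (-μ j)) (id (0:ℝ) - μ j) := by
      simpa using intervalIntegral.integral_hasDerivAt_right (hφc.intervalIntegrable 0 (-μ j))
        (hφc.stronglyMeasurableAtFilter _ _) (hφc.continuousAt)
    have := h0.comp 0 ((hasDerivAt_id (0:ℝ)).sub_const (μ j))
    simpa [Function.comp_def] using this
  have hd : HasDerivAt (fun s : ℝ => (1 / (2 * μ j)) * ((∫ t in (0:ℝ)..(s + μ j), φ t) -
      ∫ t in (0:ℝ)..(s - μ j), φ t)) ((1 / (2 * μ j)) * (φ (μ j) - φ (-μ j))) 0 :=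
    (hd1.sub hd2).const_mul _
  rw [hd.deriv]
  have : x - μ j • e = x + (-μ j) • e := by
    simp [sub_eq_add_neg, neg_smul]
  rw [this]
  simp only [hφ]
  ring

/-- If `f` is continuous, the `μ j` are positive, and the mixtured gradient map
`x ↦ ∑_j ∂_j f^j(x) e_j` is `L̃`-Lipschitz, then the central-difference gradient estimator
satisfies `‖g_f(x) - g_f(y)‖² ≤ L̃² ‖x - y‖²` for all `x, y`. -/
theorem stmt_3 (N : ℕ) (f : EuclideanSpace ℝ (Fin N) → ℝ) (hf : Continuous f)
    (μ : Fin N → ℝ) (hμ : ∀ j, 0 < μ j) (Lt : ℝ)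
    (hLip : ∀ x y : EuclideanSpace ℝ (Fin N),
      ‖mixGrad N f μ x - mixGrad N f μ y‖ ≤ Lt * ‖x - y‖) :
    ∀ x y : EuclideanSpace ℝ (Fin N),
      ‖cdGrad N f μ x - cdGrad N f μ y‖ ^ 2 ≤ Lt ^ 2 * ‖x - y‖ ^ 2 := by
  intro x y
  have h := hLip x y
  rw [mixGrad_eq_cdGrad N f hf μ hμ x, mixGrad_eq_cdGrad N f hf μ hμ y] at h
  calc ‖cdGrad N f μ x - cdGrad N f μ y‖ ^ 2 ≤ (Lt * ‖x - y‖) ^ 2 :=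
        pow_le_pow_left₀ (norm_nonneg _) h 2
    _ = Lt ^ 2 * ‖x - y‖ ^ 2 := by ring
end

section
/- Let τ, m ∈ ℕ, let ρ ≥ 0 satisfy ρτ < 1, let K : ℕ → Finset ℕ satisfy K(t) ⊆ {t − τ, t − τ + 1, …, t − 1} for every t, let s : ℕ → ℝ be nonnegative, and let a : ℕ → ℝ. If s(t) ≤ ρ ∑_{t' ∈ K(t)} s(t') + a(t) for every t with 0 ≤ t ≤ m − 1, then ∑_{t=0}^{m−1} s(t) ≤ (1/(1 − ρτ)) ∑_{t=0}^{m−1} a(t). -/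
/-- Let `ρ ≥ 0` with `ρ τ < 1`, let every delayed index set `K t` consist of
indices `t'` with `t - τ ≤ t' ≤ t - 1` (expressed in ℕ as `t' < t ∧ t ≤ t' + τ`), and let `s` be
nonnegative. If `s t ≤ ρ ∑_{t' ∈ K t} s t' + a t` for all `0 ≤ t ≤ m - 1`, then
`∑_{t=0}^{m-1} s t ≤ (1/(1 - ρ τ)) ∑_{t=0}^{m-1} a t`. -/
theorem stmt_9 (τ m : ℕ) (ρ : ℝ) (hρ : 0 ≤ ρ) (hρτ : ρ * τ < 1)
    (K : ℕ → Finset ℕ) (hK : ∀ t, ∀ t' ∈ K t, t' < t ∧ t ≤ t' + τ)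
    (s : ℕ → ℝ) (hs : ∀ t, 0 ≤ s t) (a : ℕ → ℝ)
    (hrec : ∀ t < m, s t ≤ ρ * ∑ t' ∈ K t, s t' + a t) :
    ∑ t ∈ Finset.range m, s t
      ≤ (1 / (1 - ρ * τ)) * ∑ t ∈ Finset.range m, a t := by
  have hpos : (0:ℝ) < 1 - ρ * τ := by linarith
  set S := ∑ t ∈ Finset.range m, s t with hS
  -- the double-sum bound
  have hdouble : ∑ t ∈ Finset.range m, ∑ t' ∈ K t, s t' ≤ (τ:ℝ) * S := by
    have h1 : ∑ t ∈ Finset.range m, ∑ t' ∈ K t, s t'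
        ≤ ∑ t ∈ Finset.range m, ∑ t' ∈ Finset.Ico (t - τ) t, s t' := by
      refine Finset.sum_le_sum fun t _ => ?_
      refine Finset.sum_le_sum_of_subset_of_nonneg ?_ (fun i _ _ => hs i)
      intro t' ht'
      obtain ⟨h1, h2⟩ := hK t t' ht'
      exact Finset.mem_Ico.mpr ⟨by omega, h1⟩
    have h2 : ∑ t ∈ Finset.range m, ∑ t' ∈ Finset.Ico (t - τ) t, s t'
        = ∑ t' ∈ Finset.range m,
            ∑ t ∈ (Finset.Ioc t' (t' + τ)).filter (· < m), s t' := by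
      refine Finset.sum_comm' fun t t' => ?_
      simp only [Finset.mem_range, Finset.mem_Ico, Finset.mem_Ioc, Finset.mem_filter]
      omega
    have h3 : ∑ t' ∈ Finset.range m,
        ∑ t ∈ (Finset.Ioc t' (t' + τ)).filter (· < m), s t' ≤ (τ:ℝ) * S := by
      rw [hS, Finset.mul_sum]
      refine Finset.sum_le_sum fun t' _ => ?_
      rw [Finset.sum_const, nsmul_eq_mul]
      refine mul_le_mul_of_nonneg_right ?_ (hs t')
      have : ((Finset.Ioc t' (t' + τ)).filter (· < m)).card ≤ (Finset.Ioc t' (t' + τ)).card :=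
        Finset.card_filter_le _ _
      rw [Nat.card_Ioc] at this
      exact_mod_cast le_trans (Nat.cast_le.mpr this) (by simp)
    linarith
  have hmain : S ≤ ρ * ((τ:ℝ) * S) + ∑ t ∈ Finset.range m, a t := by
    calc S ≤ ∑ t ∈ Finset.range m, (ρ * ∑ t' ∈ K t, s t' + a t) :=
          Finset.sum_le_sum fun t ht => hrec t (Finset.mem_range.mp ht)
      _ = ρ * (∑ t ∈ Finset.range m, ∑ t' ∈ K t, s t') + ∑ t ∈ Finset.range m, a t := by
          rw [Finset.sum_add_distrib, Finset.mul_sum]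
      _ ≤ ρ * ((τ:ℝ) * S) + ∑ t ∈ Finset.range m, a t := by
          have := mul_le_mul_of_nonneg_left hdouble hρ
          linarith
  have h4 : (1 - ρ * ↑τ) * S ≤ ∑ t ∈ Finset.range m, a t := by nlinarith
  calc S = (1 / (1 - ρ * τ)) * ((1 - ρ * τ) * S) := by field_simp
    _ ≤ (1 / (1 - ρ * τ)) * ∑ t ∈ Finset.range m, a t :=
        mul_le_mul_of_nonneg_left h4 (by positivity)
end
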